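/- Fix integers n ≥ 1 and j ≥ 1, a real number α ≠ 0, and a real number θ. Then the sum over all j-even set partitions π of {1,…,nj} of the weight j^{#π} · (θ/α)^{↑#π} · ∏_{b ∈ π} [ −(−α/j)^{↑(#b/j)} ] · (#b − 1)! / (#b/j − 1)! equals j · [(nj−1)!/(n−1)!] · (θ/j)^{↑n}. (This is the statement that the Chinese-restaurant construction for even partitions yields the probability distribution p_n^j(π;α,θ) = j^{#π−1} [Γ(n)/Γ(nj)] (θ/α)^{↑#π} ∏_{b∈π} [−(−α/j)^{↑(#b/j)}] Γ(#b)/Γ(#b/j) / (θ/j)^{↑n} on j-even partitions of [nj].) -/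

import Mathlib

/-- The rising factorial `x^{↑n} = x(x+1)⋯(x+n−1)`. -/
def risingFactorial (x : ℝ) (n : ℕ) : ℝ := ∏ i ∈ Finset.range n, (x + i)

/-- A set partition is even of order `j` (`j`-even) if every block size is divisible
by `j`. -/
def IsEven {N : ℕ} (j : ℕ) (π : Finpartition (Finset.univ : Finset (Fin N))) : Prop :=
  ∀ b ∈ π.parts, j ∣ b.card

instance {N j : ℕ} (π : Finpartition (Finset.univ : Finset (Fin N))) :
    Decidable (IsEven j π) := by unfold IsEven; infer_instance

/-!
Summing over the block that contains a fixed element (the Chinese restaurant recursion) shows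
that `Z_N(x) = ∑_π x^{↑#π} ∏_{b ∈ π} w(#b)` depends only on `N` and satisfies
`Z_{M+1}(x) = ∑_k C(M,k) w(k+1) x Z_{M-k}(x+1)`. Absorbing the factor `j^{#π}` into the block
weights, the closed form `N!/(N/j)! · (xα/j)^{↑(N/j)}` (zero unless `j ∣ N`) satisfies the same
recursion: once the factorials cancel, this is the Vandermonde identity for rising factorials.
-/

open Finset

lemma risingFactorial_succ (x : ℝ) (n : ℕ) :
    risingFactorial x (n + 1) = x * risingFactorial (x + 1) n := by
  rw [risingFactorial, prod_range_succ', mul_comm, risingFactorial]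
  simp only [Nat.cast_add, Nat.cast_one, Nat.cast_zero, add_zero, add_assoc, add_comm (1 : ℝ)]

open Polynomial in
lemma risingFactorial_eq_descPochhammer (x : ℝ) (k : ℕ) :
    risingFactorial x k = (-1) ^ k * (descPochhammer ℤ k).smeval (-x) := by
  rw [← aeval_eq_smeval, ← eval_map_algebraMap, descPochhammer_map,
    descPochhammer_eval_eq_prod_range, risingFactorial, ← card_range k, ← prod_const,
    card_range, ← prod_mul_distrib]
  exact prod_congr rfl fun i _ => by ring

lemma risingFactorial_add (u v : ℝ) (K : ℕ) :
    risingFactorial (u + v) K =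
      ∑ p ∈ antidiagonal K, K.choose p.1 * (risingFactorial u p.1 * risingFactorial v p.2) := by
  rw [risingFactorial_eq_descPochhammer, neg_add, Ring.descPochhammer_smeval_add _ (.all _ _),
    mul_sum]
  refine sum_congr rfl fun p hp => ?_
  rw [HasAntidiagonal.mem_antidiagonal] at hp
  simp only [risingFactorial_eq_descPochhammer, ← hp, pow_add]
  ring

namespace Finpartition

variable {ι : Type*} [DecidableEq ι] {s t : Finset ι}

lemma parts_avoid_of_mem (P : Finpartition s) (ht : t ∈ P.parts) :
    (P.avoid t).parts = P.parts.erase t := by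
  ext c
  rw [mem_avoid, mem_erase]
  constructor
  · rintro ⟨d, hd, hdt, rfl⟩
    have hne : d ≠ t := by rintro rfl; exact hdt le_rfl
    have hdisj : Disjoint d t := P.disjoint hd ht hne
    rw [hdisj.sdiff_eq_left]
    exact ⟨hne, hd⟩
  · rintro ⟨hne, hc⟩
    have hdisj : Disjoint c t := P.disjoint hc ht hne
    exact ⟨c, hc, fun hle => P.ne_bot hc (hdisj.eq_bot_of_le hle), hdisj.sdiff_eq_left⟩

def insertPart (σ : Finpartition (s \ t)) (hts : t ⊆ s) (ht : t.Nonempty) : Finpartition s :=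
  σ.extend ht.ne_empty sdiff_disjoint (sdiff_sup_cancel hts)

@[simp]
lemma parts_insertPart (σ : Finpartition (s \ t)) (hts : t ⊆ s) (ht : t.Nonempty) :
    (σ.insertPart hts ht).parts = insert t σ.parts := rfl

lemma notMem_parts_of_sdiff (σ : Finpartition (s \ t)) (ht : t.Nonempty) : t ∉ σ.parts :=
  fun h => ht.ne_empty (disjoint_self.mp (sdiff_disjoint.mono_left (σ.le h)))

lemma avoid_insertPart (σ : Finpartition (s \ t)) (hts : t ⊆ s) (ht : t.Nonempty) :
    (σ.insertPart hts ht).avoid t = σ := by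
  ext1
  rw [parts_avoid_of_mem _ (by simp), parts_insertPart, erase_insert (σ.notMem_parts_of_sdiff ht)]

lemma insertPart_avoid (P : Finpartition s) (ht : t ∈ P.parts) :
    (P.avoid t).insertPart (P.le ht) (P.nonempty_of_mem_parts ht) = P := by
  ext1
  rw [parts_insertPart, parts_avoid_of_mem P ht, insert_erase ht]

end Finpartition

section ChineseRestaurant

variable {ι : Type*} [DecidableEq ι]

noncomputable def crpSum (w : ℕ → ℝ) (s : Finset ι) (x : ℝ) : ℝ :=
  ∑ π : Finpartition s, risingFactorial x #π.parts * ∏ b ∈ π.parts, w #b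

lemma crpSum_empty (w : ℕ → ℝ) (x : ℝ) : crpSum w (∅ : Finset ι) x = 1 := by
  rw [crpSum, ← bot_eq_empty, Fintype.sum_unique, Finpartition.parts_eq_empty_iff.2 rfl]
  simp [risingFactorial]

lemma crpSum_eq_sum_part (w : ℕ → ℝ) (x : ℝ) {s : Finset ι} {a : ι} (ha : a ∈ s) :
    crpSum w s x = ∑ t ∈ s.powerset with a ∈ t, w #t * x * crpSum w (s \ t) (x + 1) := by
  rw [crpSum, ← sum_fiberwise_of_maps_to (g := fun π : Finpartition s => π.part a)
    (t := s.powerset.filter (a ∈ ·))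
    fun π _ => mem_filter.2 ⟨mem_powerset.2 (π.le (π.part_mem.2 ha)), π.mem_part ha⟩]
  refine sum_congr rfl fun t ht => ?_
  obtain ⟨hts, hat⟩ : t ⊆ s ∧ a ∈ t := by simpa using ht
  have hne : t.Nonempty := ⟨a, hat⟩
  rw [crpSum, mul_sum]
  refine sum_nbij' (fun π => π.avoid t) (fun σ => σ.insertPart hts hne) (by simp)
    (fun σ _ => mem_filter.2 ⟨mem_univ _, Finpartition.part_eq_of_mem _ (by simp) hat⟩)
    (fun π hπ => ?_) (fun σ _ => Finpartition.avoid_insertPart σ hts hne) (fun π hπ => ?_)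
  all_goals
    have htπ : t ∈ π.parts := (mem_filter.1 hπ).2 ▸ π.part_mem.2 ha
  · exact π.insertPart_avoid htπ
  · rw [← π.insertPart_avoid htπ, Finpartition.avoid_insertPart, Finpartition.parts_insertPart,
      card_insert_of_notMem ((π.avoid t).notMem_parts_of_sdiff hne), risingFactorial_succ,
      prod_insert ((π.avoid t).notMem_parts_of_sdiff hne)]
    ring

lemma crpSum_insert (w : ℕ → ℝ) (x : ℝ) {s : Finset ι} {a : ι} (ha : a ∉ s) :
    crpSum w (insert a s) x = ∑ u ∈ s.powerset, w (#u + 1) * x * crpSum w (s \ u) (x + 1) := by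
  rw [crpSum_eq_sum_part w x (mem_insert_self a s), sum_filter, sum_powerset_insert ha]
  have hnot : ∀ u ∈ s.powerset, a ∉ u := fun u hu h => ha (mem_powerset.1 hu h)
  rw [sum_eq_zero fun u hu => if_neg (hnot u hu), zero_add]
  refine sum_congr rfl fun u hu => ?_
  rw [if_pos (mem_insert_self a u), card_insert_of_notMem (hnot u hu), insert_sdiff_insert,
    sdiff_insert_of_notMem ha]

theorem crpSum_eq_of_recursion (w : ℕ → ℝ) (B : ℕ → ℝ → ℝ) (hB0 : ∀ x, B 0 x = 1)
    (hB : ∀ M x, B (M + 1) x =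
      ∑ k ∈ range (M + 1), M.choose k * (w (k + 1) * x * B (M - k) (x + 1)))
    (s : Finset ι) (x : ℝ) : crpSum w s x = B #s x := by
  induction hs : #s using Nat.strong_induction_on generalizing s x with
  | _ N ih =>
    rcases N with _ | M
    · rw [card_eq_zero.1 hs, crpSum_empty, hB0]
    obtain ⟨a, s, ha, rfl, rfl⟩ := card_eq_succ.1 hs
    have hrec : ∀ u ∈ s.powerset, crpSum w (s \ u) (x + 1) = B (#s - #u) (x + 1) :=
      fun u hu => ih _ (by omega) _ _ (card_sdiff_of_subset (mem_powerset.1 hu))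
    rw [crpSum_insert w x ha, sum_congr rfl fun u hu => by rw [hrec u hu],
      sum_powerset_apply_card (fun k => w (k + 1) * x * B (#s - k) (x + 1)), hB]
    simp only [nsmul_eq_mul]

end ChineseRestaurant

lemma sum_range_mul_eq_of_not_dvd {M : Type*} [AddCommMonoid M] {j : ℕ} (hj : 0 < j)
    (n : ℕ) {f : ℕ → M} (hf : ∀ k, ¬ j ∣ k + 1 → f k = 0) :
    ∑ k ∈ range (j * n), f k = ∑ m ∈ range n, f (j * m + (j - 1)) := by
  induction n with
  | zero => simp
  | succ n ih =>
    rw [mul_add_one, sum_range_add, ih, sum_range_succ _ n]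
    congr 1
    refine sum_eq_single_of_mem (j - 1) (mem_range.2 (by omega)) fun r hr hrj => ?_
    refine hf _ fun hdvd => hrj ?_
    have hr1 : j ∣ r + 1 := by rwa [add_assoc, Nat.dvd_add_right (dvd_mul_right j n)] at hdvd
    have hjr := Nat.le_of_dvd (by omega) hr1
    have hrj := mem_range.1 hr
    omega

section EvenPartitions

open Nat

variable (j : ℕ) (α : ℝ)

noncomputable def evenBlockWeight (c : ℕ) : ℝ :=
  if j ∣ c then
    j * (-(risingFactorial (-(α / j)) (c / j)) * ((c - 1)! : ℝ) / ((c / j - 1)! : ℝ))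
  else 0

noncomputable def evenCrpClosedForm (N : ℕ) (x : ℝ) : ℝ :=
  if j ∣ N then (N ! / (N / j)! : ℝ) * risingFactorial (x * α / j) (N / j) else 0

variable {j α}

lemma evenBlockWeight_of_dvd {c : ℕ} (h : j ∣ c) : evenBlockWeight j α c =
    j * (-(risingFactorial (-(α / j)) (c / j)) * ((c - 1)! : ℝ) / ((c / j - 1)! : ℝ)) :=
  if_pos h

lemma evenBlockWeight_of_not_dvd {c : ℕ} (h : ¬ j ∣ c) : evenBlockWeight j α c = 0 :=
  if_neg h

variable (α)

lemma evenBlockWeight_mul_succ (hj : 0 < j) (p : ℕ) :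
    evenBlockWeight j α (j * (p + 1)) =
      α * risingFactorial (1 - α / j) p * ((j * p + (j - 1))! / p ! : ℝ) := by
  have hjR : (j : ℝ) ≠ 0 := by positivity
  rw [evenBlockWeight_of_dvd (dvd_mul_right j _), Nat.mul_div_cancel_left _ hj,
    risingFactorial_succ, show j * (p + 1) - 1 = j * p + (j - 1) by rw [Nat.mul_add_one]; omega,
    Nat.add_sub_cancel]
  field_simp
  ring_nf

lemma evenCrpClosedForm_mul (hj : 0 < j) (q : ℕ) (x : ℝ) :
    evenCrpClosedForm j α (j * q) x = ((j * q)! / q ! : ℝ) * risingFactorial (x * α / j) q := by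
  rw [evenCrpClosedForm, if_pos (dvd_mul_right j q), Nat.mul_div_cancel_left _ hj]

lemma evenCrpClosedForm_succ_of_not_dvd {M : ℕ} (hM : ¬ j ∣ M + 1) (x : ℝ) :
    evenCrpClosedForm j α (M + 1) x =
      ∑ k ∈ range (M + 1),
        M.choose k * (evenBlockWeight j α (k + 1) * x * evenCrpClosedForm j α (M - k) (x + 1)) := by
  rw [evenCrpClosedForm, if_neg hM]
  refine (sum_eq_zero fun k hk => ?_).symm
  by_cases hk1 : j ∣ k + 1
  · have hMk : ¬ j ∣ M - k := fun h =>
      hM (by rw [show M + 1 = k + 1 + (M - k) by have := mem_range.1 hk; omega]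
             exact dvd_add hk1 h)
    simp [evenCrpClosedForm, hMk]
  · rw [evenBlockWeight_of_not_dvd hk1, zero_mul, zero_mul, mul_zero]

lemma evenCrpClosedForm_summand (hj : 0 < j) {n p q M : ℕ} (hpq : p + q = n)
    (hM : M = j * n + (j - 1)) (x : ℝ) :
    M.choose (j * p + (j - 1)) * (evenBlockWeight j α (j * p + (j - 1) + 1) * x *
        evenCrpClosedForm j α (M - (j * p + (j - 1))) (x + 1)) =
      (M ! / n ! : ℝ) * α * x *
        (n.choose p * (risingFactorial (1 - α / j) p * risingFactorial ((x + 1) * α / j) q)) := by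
  obtain rfl : M = j * p + (j - 1) + j * q := by rw [hM, ← hpq]; ring
  rw [show j * p + (j - 1) + 1 = j * (p + 1) by rw [Nat.mul_add_one]; omega,
    Nat.add_sub_cancel_left,
    evenBlockWeight_mul_succ α hj, evenCrpClosedForm_mul α hj, ← hpq, Nat.choose_symm_add,
    Nat.choose_symm_add (a := p), ← Nat.add_choose_mul_factorial_mul_factorial (j * p + (j - 1)),
    ← Nat.add_choose_mul_factorial_mul_factorial p]
  have : ((p + q).choose q : ℝ) ≠ 0 := Nat.cast_ne_zero.2 (Nat.choose_pos (by omega)).ne'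
  push_cast
  field_simp

lemma evenCrpClosedForm_succ_of_dvd (hj : 0 < j) {M n : ℕ} (hM : M = j * n + (j - 1)) (x : ℝ) :
    evenCrpClosedForm j α (M + 1) x =
      ∑ k ∈ range (M + 1),
        M.choose k * (evenBlockWeight j α (k + 1) * x * evenCrpClosedForm j α (M - k) (x + 1)) := by
  have hM1 : M + 1 = j * (n + 1) := by rw [hM, Nat.mul_add_one]; omega
  have hjR : (j : ℝ) ≠ 0 := by positivity
  rw [hM1, sum_range_mul_eq_of_not_dvd hj _ fun k hk => by
      rw [evenBlockWeight_of_not_dvd hk, zero_mul, zero_mul, mul_zero],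
    ← Nat.sum_antidiagonal_eq_sum_range_succ (fun p q => M.choose (j * p + (j - 1)) *
      (evenBlockWeight j α (j * p + (j - 1) + 1) * x *
        evenCrpClosedForm j α (M - (j * p + (j - 1))) (x + 1))),
    sum_congr rfl fun pq hpq =>
      evenCrpClosedForm_summand α hj (HasAntidiagonal.mem_antidiagonal.1 hpq) hM x,
    ← mul_sum, ← risingFactorial_add, evenCrpClosedForm_mul α hj, ← hM1, risingFactorial_succ,
    show 1 - α / j + (x + 1) * α / j = x * α / j + 1 by field_simp; ring,
    Nat.factorial_succ M, Nat.factorial_succ n, hM1]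
  push_cast
  field_simp

lemma evenCrpClosedForm_succ (hj : 0 < j) (M : ℕ) (x : ℝ) :
    evenCrpClosedForm j α (M + 1) x =
      ∑ k ∈ range (M + 1),
        M.choose k * (evenBlockWeight j α (k + 1) * x * evenCrpClosedForm j α (M - k) (x + 1)) := by
  by_cases hM : j ∣ M + 1
  · obtain ⟨n, hn⟩ := hM
    obtain ⟨n, rfl⟩ : ∃ m, n = m + 1 := Nat.exists_eq_succ_of_ne_zero (by rintro rfl; omega)
    exact evenCrpClosedForm_succ_of_dvd α hj (n := n) (by rw [Nat.mul_add_one] at hn; omega) x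
  · exact evenCrpClosedForm_succ_of_not_dvd α hM x

lemma sum_isEven_eq_crpSum (N : ℕ) (x : ℝ) :
    ∑ π ∈ (univ : Finset (Finpartition (univ : Finset (Fin N)))).filter (fun π => IsEven j π),
      (j : ℝ) ^ #π.parts * risingFactorial x #π.parts *
        ∏ b ∈ π.parts,
          -risingFactorial (-(α / j)) (#b / j) * ((#b - 1)! : ℝ) / ((#b / j - 1)! : ℝ) =
    crpSum (evenBlockWeight j α) (univ : Finset (Fin N)) x := by
  have heven : ∀ π ∈ (univ : Finset (Finpartition (univ : Finset (Fin N)))),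
      risingFactorial x #π.parts * ∏ b ∈ π.parts, evenBlockWeight j α #b ≠ 0 → IsEven j π :=
    fun π _ h b hb => by
    by_contra hbj
    exact h (by rw [prod_eq_zero hb (evenBlockWeight_of_not_dvd hbj), mul_zero])
  rw [crpSum, ← sum_filter_of_ne heven]
  refine sum_congr rfl fun π hπ => ?_
  rw [prod_congr rfl fun b hb => evenBlockWeight_of_dvd ((mem_filter.1 hπ).2 b hb),
    prod_mul_distrib, prod_const]
  ring

end EvenPartitions

/-- Normalization of the even Chinese restaurant process distribution: the weights
`j^{#π}(θ/α)^{↑#π} ∏_{b∈π} [−(−α/j)^{↑(#b/j)}](#b−1)!/(#b/j−1)!` on `j`-even set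
partitions of `{1,…,nj}` sum to `j·[(nj−1)!/(n−1)!]·(θ/j)^{↑n}`. -/
theorem even_crp_normalization (n j : ℕ) (hn : 1 ≤ n) (hj : 1 ≤ j)
    (α : ℝ) (hα : α ≠ 0) (θ : ℝ) :
    ∑ π ∈ (Finset.univ : Finset (Finpartition (Finset.univ : Finset (Fin (n * j))))).filter
        (fun π => IsEven j π),
      (j : ℝ) ^ π.parts.card * risingFactorial (θ / α) π.parts.card *
        ∏ b ∈ π.parts,
          (-(risingFactorial (-(α / j)) (b.card / j))) *
            (Nat.factorial (b.card - 1) : ℝ) / (Nat.factorial (b.card / j - 1) : ℝ) =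
    (j : ℝ) * ((Nat.factorial (n * j - 1) : ℝ) / (Nat.factorial (n - 1) : ℝ)) *
      risingFactorial (θ / j) n := by
  rw [sum_isEven_eq_crpSum, crpSum_eq_of_recursion _ (evenCrpClosedForm j α)
      (fun x => by simp [evenCrpClosedForm, risingFactorial]) (evenCrpClosedForm_succ α hj),
    card_univ, Fintype.card_fin, mul_comm n j, evenCrpClosedForm_mul α hj, div_mul_cancel₀ θ hα,
    ← Nat.mul_factorial_pred (by positivity : j * n ≠ 0),
    ← Nat.mul_factorial_pred (by omega : n ≠ 0)]
  have : (n : ℝ) ≠ 0 := by positivity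
  push_cast
  field_simp
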